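/- Let X be an arbitrary Banach space, Y a Banach space with the metric extension property, and T : X → Y a bounded linear operator. Then for every n ∈ ℕ, αₙ(T) = cₙ(T). -/

import Mathlib

open NormedSpace Metric Filter Topology
open scoped ENNReal Pointwise

/-- The `n`-th approximation number: `αₙ(T) = inf {‖T - A‖ : rank A ≤ n}`. -/
noncomputable def approxNumber {X Y : Type*} [NormedAddCommGroup X] [NormedSpace ℝ X]
    [NormedAddCommGroup Y] [NormedSpace ℝ Y] (n : ℕ) (T : X →L[ℝ] Y) : ℝ :=
  sInf {c : ℝ | ∃ A : X →L[ℝ] Y, FiniteDimensional ℝ (LinearMap.range (A : X →ₗ[ℝ] Y)) ∧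
    Module.finrank ℝ (LinearMap.range (A : X →ₗ[ℝ] Y)) ≤ n ∧ c = ‖T - A‖}

/-- The canonical quotient map `Z → Z ⧸ G` as a continuous linear map. -/
noncomputable def quotCLM {Z : Type*} [NormedAddCommGroup Z] [NormedSpace ℝ Z]
    (G : Submodule ℝ Z) : Z →L[ℝ] Z ⧸ G :=
  ⟨G.mkQ, continuous_quot_mk⟩

/-- The `n`-th Gelfand number: `cₙ(T) = inf {ε > 0 : ∃ a₁,…,aₙ ∈ X*,
    ‖T x‖ ≤ max_i |aᵢ(x)| + ε ‖x‖ for all x}`. -/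
noncomputable def gelfandNumber {X Y : Type*} [NormedAddCommGroup X] [NormedSpace ℝ X]
    [NormedAddCommGroup Y] [NormedSpace ℝ Y] (n : ℕ) (T : X →L[ℝ] Y) : ℝ :=
  sInf {ε : ℝ | 0 < ε ∧ ∃ a : Fin n → StrongDual ℝ X,
    ∀ x : X, ‖T x‖ ≤ (⨆ i, |a i x|) + ε * ‖x‖}

/-- `Y` has the metric extension property: every operator from a closed subspace `M ⊆ Z`
into `Y` extends to `Z` with the same norm. -/
def MetricExtensionProperty (Y : Type v) [NormedAddCommGroup Y] [NormedSpace ℝ Y] : Prop :=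
  ∀ (Z : Type v) [NormedAddCommGroup Z] [NormedSpace ℝ Z] [CompleteSpace Z]
    (M : Submodule ℝ Z), IsClosed (M : Set Z) →
    ∀ T : M →L[ℝ] Y, ∃ S : Z →L[ℝ] Y, (∀ m : M, S m = T m) ∧ ‖S‖ = ‖T‖

/-!
A rank-`n` operator `A` is dominated by `n` functionals, `‖A x‖ ≤ maxᵢ |aᵢ x|`, so
`‖T x‖ ≤ maxᵢ |aᵢ x| + ‖T - A‖ ‖x‖` and `cₙ(T) ≤ αₙ(T)`; this holds for every target space.
Conversely, if `‖T x‖ ≤ maxᵢ |aᵢ x| + ε ‖x‖`, then `T` has norm at most `ε` on the common kernel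
`M` of the `aᵢ`. The extension property extends `T|_M` to `S : X → Y` with `‖S‖ ≤ ε`; then
`T - S` vanishes on `M`, which has codimension at most `n`, so `T - S` has rank at most `n` and
`αₙ(T) ≤ ‖T - (T - S)‖ = ‖S‖ ≤ ε`.
-/

section FiniteRank

variable {E : Type*} [NormedAddCommGroup E] [NormedSpace ℝ E]

theorem FiniteDimensional.exists_norm_le_iSup_abs_dual [FiniteDimensional ℝ E] {n : ℕ}
    (hn : Module.finrank ℝ E ≤ n) : ∃ b : Fin n → StrongDual ℝ E, ∀ y, ‖y‖ ≤ ⨆ i, |b i y| := by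
  obtain ⟨k, rfl⟩ := Nat.exists_eq_add_of_le hn
  obtain ⟨e⟩ := FiniteDimensional.nonempty_continuousLinearEquiv_of_finrank_eq
    (Module.finrank_fin_fun ℝ (n := Module.finrank ℝ E)).symm
  obtain ⟨K, hK, he⟩ := e.symm.toContinuousLinearMap.bound
  let b : Fin (Module.finrank ℝ E + k) → StrongDual ℝ E :=
    Fin.append (fun j => K • (ContinuousLinearMap.proj j).comp e.toContinuousLinearMap) 0
  refine ⟨b, fun y => ?_⟩
  calc ‖y‖ = ‖e.symm (e y)‖ := by rw [e.symm_apply_apply]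
    _ ≤ K * ‖e y‖ := he _
    _ = ‖K • e y‖ := by rw [norm_smul, Real.norm_of_nonneg hK.le]
    _ ≤ ⨆ i, |b i y| := (pi_norm_le_iff_of_nonneg (Real.iSup_nonneg fun _ => abs_nonneg _)).2
      fun j => (le_ciSup (Set.finite_range _).bddAbove (Fin.castAdd k j)).trans_eq' (by simp [b])

theorem ContinuousLinearMap.exists_norm_apply_le_iSup_abs_dual {X Y : Type*}
    [NormedAddCommGroup X] [NormedSpace ℝ X] [NormedAddCommGroup Y] [NormedSpace ℝ Y]
    (A : X →L[ℝ] Y) [FiniteDimensional ℝ (LinearMap.range (A : X →ₗ[ℝ] Y))] {n : ℕ}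
    (hn : Module.finrank ℝ (LinearMap.range (A : X →ₗ[ℝ] Y)) ≤ n) :
    ∃ a : Fin n → StrongDual ℝ X, ∀ x, ‖A x‖ ≤ ⨆ i, |a i x| := by
  obtain ⟨b, hb⟩ := FiniteDimensional.exists_norm_le_iSup_abs_dual hn
  let A' : X →L[ℝ] LinearMap.range (A : X →ₗ[ℝ] Y) :=
    A.codRestrict _ fun x => LinearMap.mem_range_self _ x
  exact ⟨fun i => (b i).comp A', fun x => hb (A' x)⟩

end FiniteRank

section Rank

variable {K X V W : Type*} [Field K] [AddCommGroup X] [Module K X] [AddCommGroup V] [Module K V]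
  [FiniteDimensional K V] [AddCommGroup W] [Module K W]

theorem LinearMap.finiteDimensional_range_of_ker_le {φ : X →ₗ[K] V} {F : X →ₗ[K] W}
    (h : LinearMap.ker φ ≤ LinearMap.ker F) : FiniteDimensional K (LinearMap.range F) := by
  have : FiniteDimensional K (X ⧸ LinearMap.ker φ) := .equiv φ.quotKerEquivRange.symm
  rw [← Submodule.range_liftQ _ F h]
  infer_instance

theorem LinearMap.finrank_range_le_of_ker_le {φ : X →ₗ[K] V} {F : X →ₗ[K] W}
    (h : LinearMap.ker φ ≤ LinearMap.ker F) :
    Module.finrank K (LinearMap.range F) ≤ Module.finrank K V := by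
  have : FiniteDimensional K (X ⧸ LinearMap.ker φ) := .equiv φ.quotKerEquivRange.symm
  calc Module.finrank K (LinearMap.range F)
      = Module.finrank K (LinearMap.range ((LinearMap.ker φ).liftQ F h)) := by
        rw [Submodule.range_liftQ]
    _ ≤ Module.finrank K (X ⧸ LinearMap.ker φ) := LinearMap.finrank_range_le _
    _ = Module.finrank K (LinearMap.range φ) := φ.quotKerEquivRange.finrank_eq
    _ ≤ Module.finrank K V := Submodule.finrank_le _

end Rank

section LpInfty

variable {ι X : Type*} [NormedAddCommGroup X] [NormedSpace ℝ X] {E : ι → Type*}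
  [∀ i, NormedAddCommGroup (E i)] [∀ i, NormedSpace ℝ (E i)]

noncomputable def ContinuousLinearMap.lpInfty (Φ : ∀ i, X →L[ℝ] E i) {C : ℝ} (hC : 0 ≤ C)
    (hΦ : ∀ i, ‖Φ i‖ ≤ C) : X →L[ℝ] lp E ∞ :=
  LinearMap.mkContinuous
    { toFun := fun x => ⟨fun i => Φ i x, memℓp_infty ⟨C * ‖x‖, by
        rintro _ ⟨i, rfl⟩
        exact (Φ i).le_of_opNorm_le (hΦ i) x⟩⟩
      map_add' := fun x y => by ext i; exact map_add (Φ i) x y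
      map_smul' := fun c x => by ext i; exact map_smul (Φ i) c x }
    C fun x => lp.norm_le_of_forall_le (by positivity) fun i => (Φ i).le_of_opNorm_le (hΦ i) x

theorem ContinuousLinearMap.norm_lpInfty_le (Φ : ∀ i, X →L[ℝ] E i) {C : ℝ} (hC : 0 ≤ C)
    (hΦ : ∀ i, ‖Φ i‖ ≤ C) : ‖lpInfty Φ hC hΦ‖ ≤ C :=
  LinearMap.mkContinuous_norm_le _ hC _

theorem lp.exists_extension_norm_le (M : Submodule ℝ X) (g : M →L[ℝ] lp (fun _ : ι => ℝ) ∞) :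
    ∃ S : X →L[ℝ] lp (fun _ : ι => ℝ) ∞, (∀ m : M, S m = g m) ∧ ‖S‖ ≤ ‖g‖ := by
  choose Φ hΦ hΦn using fun i => exists_extension_norm_eq M ((lp.evalCLM ℝ _ ∞ i).comp g)
  have hΦg : ∀ i, ‖Φ i‖ ≤ ‖g‖ := fun i => (hΦn i).trans_le <|
    ContinuousLinearMap.opNorm_le_bound _ (norm_nonneg g) fun m =>
      (lp.norm_apply_le_norm ENNReal.top_ne_zero (g m) i).trans (g.le_opNorm m)
  exact ⟨.lpInfty Φ (norm_nonneg g) hΦg, fun m => lp.ext (funext fun i => hΦ i m),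
    ContinuousLinearMap.norm_lpInfty_le _ _ _⟩

end LpInfty

section DualBall

variable {Y : Type*} [NormedAddCommGroup Y] [NormedSpace ℝ Y]

variable (Y) in
noncomputable def evalDualBall :
    Y →L[ℝ] lp (fun _ : {f : StrongDual ℝ Y // ‖f‖ ≤ 1} => ℝ) ∞ :=
  .lpInfty (fun f => f.1) zero_le_one fun f => f.2

theorem norm_evalDualBall_apply (y : Y) : ‖evalDualBall Y y‖ = ‖y‖ := by
  refine le_antisymm ?_ ?_
  · exact ((evalDualBall Y).le_opNorm y).trans
      (mul_le_of_le_one_left (norm_nonneg y) (ContinuousLinearMap.norm_lpInfty_le _ _ _))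
  · obtain ⟨f, hf, hfy⟩ := exists_dual_vector'' ℝ y
    calc ‖y‖ = ‖f y‖ := by simp [hfy]
      _ ≤ ‖evalDualBall Y y‖ :=
        lp.norm_apply_le_norm ENNReal.top_ne_zero (evalDualBall Y y) ⟨f, hf⟩

end DualBall

section MetricExtensionProperty

variable {Y : Type v} [NormedAddCommGroup Y] [NormedSpace ℝ Y] [CompleteSpace Y]

theorem MetricExtensionProperty.exists_retraction (hY : MetricExtensionProperty Y)
    {Z : Type v} [NormedAddCommGroup Z] [NormedSpace ℝ Z] [CompleteSpace Z] (j : Y →ₗᵢ[ℝ] Z) :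
    ∃ P : Z →L[ℝ] Y, ‖P‖ ≤ 1 ∧ ∀ y, P (j y) = y := by
  have hclosed : IsClosed (LinearMap.range j.toLinearMap : Set Z) := by
    convert j.isometry.isClosedEmbedding.isClosed_range
    exact LinearMap.coe_range _
  obtain ⟨P, hP, hPn⟩ :=
    hY Z _ hclosed j.equivRange.symm.toContinuousLinearEquiv.toContinuousLinearMap
  refine ⟨P, hPn.trans_le (LinearIsometry.norm_toContinuousLinearMap_le _), fun y => ?_⟩
  simpa using hP (j.equivRange y)

/-- The metric extension property only speaks about spaces `Z` in the universe of `Y` and about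
closed subspaces; routing through `ℓ∞` over the dual unit ball of `Y`, which is `1`-injective by
coordinatewise Hahn–Banach and onto which `Y` is `1`-complemented, removes both restrictions. -/
theorem MetricExtensionProperty.exists_extension_norm_le (hY : MetricExtensionProperty Y)
    {X : Type*} [NormedAddCommGroup X] [NormedSpace ℝ X] (M : Submodule ℝ X) (g : M →L[ℝ] Y) :
    ∃ S : X →L[ℝ] Y, (∀ m : M, S m = g m) ∧ ‖S‖ ≤ ‖g‖ := by
  let j : Y →ₗᵢ[ℝ] _ := ⟨(evalDualBall Y).toLinearMap, norm_evalDualBall_apply⟩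
  obtain ⟨P, hP, hPj⟩ := hY.exists_retraction j
  obtain ⟨S, hS, hSn⟩ := lp.exists_extension_norm_le M (j.toContinuousLinearMap.comp g)
  refine ⟨P.comp S, fun m => by simp [hS, hPj], ?_⟩
  calc ‖P.comp S‖ ≤ ‖P‖ * ‖S‖ := P.opNorm_comp_le S
    _ ≤ 1 * ‖j.toContinuousLinearMap.comp g‖ := by gcongr
    _ = ‖g‖ := by rw [one_mul, j.norm_toContinuousLinearMap_comp]

end MetricExtensionProperty

section ApproximationAndGelfandNumbers

variable {X Y : Type*} [NormedAddCommGroup X] [NormedSpace ℝ X] [NormedAddCommGroup Y]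
  [NormedSpace ℝ Y] {n : ℕ} {T : X →L[ℝ] Y}

theorem approxNumber_le_norm_sub (A : X →L[ℝ] Y)
    [FiniteDimensional ℝ (LinearMap.range (A : X →ₗ[ℝ] Y))]
    (hA : Module.finrank ℝ (LinearMap.range (A : X →ₗ[ℝ] Y)) ≤ n) :
    approxNumber n T ≤ ‖T - A‖ :=
  csInf_le ⟨0, by rintro _ ⟨B, -, -, rfl⟩; exact norm_nonneg _⟩ ⟨A, inferInstance, hA, rfl⟩

theorem le_approxNumber {c : ℝ}
    (h : ∀ A : X →L[ℝ] Y, FiniteDimensional ℝ (LinearMap.range (A : X →ₗ[ℝ] Y)) →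
      Module.finrank ℝ (LinearMap.range (A : X →ₗ[ℝ] Y)) ≤ n → c ≤ ‖T - A‖) :
    c ≤ approxNumber n T := by
  have h0 : LinearMap.range ((0 : X →L[ℝ] Y) : X →ₗ[ℝ] Y) = ⊥ := LinearMap.range_zero
  refine le_csInf ⟨‖T - 0‖, 0, h0 ▸ inferInstance, h0 ▸ (finrank_bot ℝ Y).trans_le n.zero_le, rfl⟩
    fun _ ⟨A, hfin, hA, hc⟩ => hc ▸ h A hfin hA

theorem gelfandNumber_le {ε : ℝ} (hε : 0 < ε) (a : Fin n → StrongDual ℝ X)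
    (ha : ∀ x, ‖T x‖ ≤ (⨆ i, |a i x|) + ε * ‖x‖) : gelfandNumber n T ≤ ε :=
  csInf_le ⟨0, fun _ hε => hε.1.le⟩ ⟨hε, a, ha⟩

theorem le_gelfandNumber {c : ℝ}
    (h : ∀ ε > 0, ∀ a : Fin n → StrongDual ℝ X, (∀ x, ‖T x‖ ≤ (⨆ i, |a i x|) + ε * ‖x‖) → c ≤ ε) :
    c ≤ gelfandNumber n T := by
  refine le_csInf ⟨‖T‖ + 1, by positivity, 0, fun x => ?_⟩ fun ε ⟨hε, a, ha⟩ => h ε hε a ha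
  calc ‖T x‖ ≤ ‖T‖ * ‖x‖ := T.le_opNorm x
    _ ≤ (‖T‖ + 1) * ‖x‖ := by gcongr; linarith
    _ ≤ (⨆ _ : Fin n, |(0 : StrongDual ℝ X) x|) + (‖T‖ + 1) * ‖x‖ := by simp

theorem gelfandNumber_le_approxNumber (n : ℕ) (T : X →L[ℝ] Y) :
    gelfandNumber n T ≤ approxNumber n T := by
  refine le_approxNumber fun A _ hA => le_of_forall_pos_le_add fun δ hδ => ?_
  obtain ⟨a, ha⟩ := A.exists_norm_apply_le_iSup_abs_dual hA
  refine gelfandNumber_le (by positivity) a fun x => ?_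
  calc ‖T x‖ = ‖A x + (T - A) x‖ := by simp
    _ ≤ ‖A x‖ + ‖T - A‖ * ‖x‖ := (norm_add_le _ _).trans (by gcongr; exact (T - A).le_opNorm x)
    _ ≤ (⨆ i, |a i x|) + (‖T - A‖ + δ) * ‖x‖ := by gcongr; exacts [ha x, by linarith]

theorem approxNumber_le_of_norm_le_iSup_abs_add [CompleteSpace Y] (hY : MetricExtensionProperty Y)
    {ε : ℝ} (hε : 0 ≤ ε) (a : Fin n → StrongDual ℝ X)
    (ha : ∀ x, ‖T x‖ ≤ (⨆ i, |a i x|) + ε * ‖x‖) : approxNumber n T ≤ ε := by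
  set M := LinearMap.ker (ContinuousLinearMap.pi a : X →ₗ[ℝ] Fin n → ℝ)
  have hTM : ‖T.comp M.subtypeL‖ ≤ ε := by
    refine ContinuousLinearMap.opNorm_le_bound _ hε fun m => ?_
    have hm : ∀ i, a i m = 0 := fun i => congrFun (LinearMap.mem_ker.mp m.2) i
    simpa [hm] using ha m
  obtain ⟨S, hS, hSn⟩ := hY.exists_extension_norm_le M (T.comp M.subtypeL)
  have hker : M ≤ LinearMap.ker ((T - S : X →L[ℝ] Y) : X →ₗ[ℝ] Y) := fun x hx => by
    simp [hS ⟨x, hx⟩]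
  have := LinearMap.finiteDimensional_range_of_ker_le hker
  calc approxNumber n T ≤ ‖T - (T - S)‖ := approxNumber_le_norm_sub _
        ((LinearMap.finrank_range_le_of_ker_le hker).trans (Module.finrank_fin_fun ℝ).le)
    _ = ‖S‖ := by rw [sub_sub_cancel]
    _ ≤ ε := hSn.trans hTM

theorem approxNumber_le_gelfandNumber [CompleteSpace Y] (hY : MetricExtensionProperty Y)
    (n : ℕ) (T : X →L[ℝ] Y) : approxNumber n T ≤ gelfandNumber n T :=
  le_gelfandNumber fun _ hε a ha => approxNumber_le_of_norm_le_iSup_abs_add hY hε.le a ha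

end ApproximationAndGelfandNumbers

variable {X Y : Type*} [NormedAddCommGroup X] [NormedSpace ℝ X] [CompleteSpace X]
  [NormedAddCommGroup Y] [NormedSpace ℝ Y] [CompleteSpace Y]

/-- If `Y` has the metric extension property, then `αₙ(T) = cₙ(T)` for every operator
`T : X → Y` from an arbitrary Banach space `X`. -/
theorem approxNumber_eq_gelfandNumber (hY : MetricExtensionProperty Y)
    (T : X →L[ℝ] Y) (n : ℕ) :
    approxNumber n T = gelfandNumber n T :=
  (approxNumber_le_gelfandNumber hY n T).antisymm (gelfandNumber_le_approxNumber n T)
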